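/- The epistemic logic program Π₃ consisting of the rules { e ← h. ; e ← m, f. ; ne ← not f, not h. ; f | h. ; in ← not K e, not K ne. ; a ← K in. } has exactly one K15-world view, namely {{h, e, in, a}, {f, in, a}}. -/
import Mathlib


/- # A formalization of Epistemic Logic Programs (ELPs)

Atoms are drawn from an arbitrary type `α`.
An objective literal is an atom `a` or a default-negated atom `not a`.
A body literal is an objective literal, a subjective literal `K a`,
or a negated subjective literal `not K a`.
A rule has a head (a set of atoms, read disjunctively; the empty head is `⊥`,
i.e. the rule is a constraint) and a body (a set of body literals).
A program is a set of rules. -/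

inductive OLit (α : Type) : Type where
  | pos : α → OLit α
  | neg : α → OLit α

inductive BLit (α : Type) : Type where
  | obj : OLit α → BLit α
  | k   : α → BLit α
  | nk  : α → BLit α

structure Rule (α : Type) : Type where
  head : Set α
  body : Set (BLit α)

abbrev Program (α : Type) : Type := Set (Rule α)

variable {α : Type}

def BLit.atom : BLit α → α
  | .obj (.pos a) => a
  | .obj (.neg a) => a
  | .k a => a
  | .nk a => a

def BLit.isObj : BLit α → Prop
  | .obj _ => True
  | _ => False

def Rule.posBody (r : Rule α) : Set α := {a | BLit.obj (OLit.pos a) ∈ r.body}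
def Rule.negBody (r : Rule α) : Set α := {a | BLit.obj (OLit.neg a) ∈ r.body}
def Rule.bodyObjAtoms (r : Rule α) : Set α := r.posBody ∪ r.negBody
def Rule.bodySubjAtoms (r : Rule α) : Set α :=
  {a | BLit.k a ∈ r.body ∨ BLit.nk a ∈ r.body}
def Rule.atoms (r : Rule α) : Set α := r.head ∪ BLit.atom '' r.body
def Rule.Objective (r : Rule α) : Prop := ∀ l ∈ r.body, l.isObj
def Rule.Subjective (r : Rule α) : Prop := ∀ l ∈ r.body, ¬ l.isObj

def Program.atoms (P : Program α) : Set α := ⋃ r ∈ P, Rule.atoms r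
def Program.objAtoms (P : Program α) : Set α := ⋃ r ∈ P, (r.head ∪ r.bodyObjAtoms)
def Program.Objective (P : Program α) : Prop := ∀ r ∈ P, r.Objective

/-- `W ⊨ K a` : `a` belongs to every member of `W`. -/
def KSat (W : Set (Set α)) (a : α) : Prop := ∀ I ∈ W, a ∈ I

def satOLit (I : Set α) : OLit α → Prop
  | .pos a => a ∈ I
  | .neg a => a ∉ I

def satBLit (W : Set (Set α)) (I : Set α) : BLit α → Prop
  | .obj l => satOLit I l
  | .k a => KSat W a
  | .nk a => ¬ KSat W a

/-- A positive rule, given as (head, positive body), is classically satisfied by `J`. -/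
def ModelsPosRule (J : Set α) (hb : Set α × Set α) : Prop :=
  hb.2 ⊆ J → (hb.1 ∩ J).Nonempty

/-- The Gelfond–Lifschitz reduct `P^I` of an (objective) program:
remove every rule whose body contains some `not a` with `a ∈ I`,
and delete all negative literals from the remaining rules;
the reduct is represented as a set of positive rules (head, positive body). -/
def GLReduct (P : Program α) (I : Set α) : Set (Set α × Set α) :=
  {hb | ∃ r ∈ P, (∀ a ∈ r.negBody, a ∉ I) ∧ hb = (r.head, r.posBody)}

def ModelsReduct (J : Set α) (R : Set (Set α × Set α)) : Prop :=
  ∀ hb ∈ R, ModelsPosRule J hb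

/-- `I` is an answer set (stable model) of `P` iff `I` is a minimal model
(w.r.t. `⊆`) of the Gelfond–Lifschitz reduct `P^I`. -/
def StableModel (P : Program α) (I : Set α) : Prop :=
  ModelsReduct I (GLReduct P I) ∧ ∀ J ⊆ I, ModelsReduct J (GLReduct P I) → J = I

/-- Body of a rule after taking the K15-reduct w.r.t. `W`:
objective literals are kept; `K a` (in a kept rule, i.e. with `W ⊨ K a`)
is replaced by `a`; in `not K a`, the inner `K a` is replaced by `⊥`
(so the literal becomes `⊤` and disappears) when `W ⊭ K a`,
and by `a` (so the literal becomes `not a`) when `W ⊨ K a`. -/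
def K15ReductBody (W : Set (Set α)) (b : Set (BLit α)) : Set (BLit α) :=
  {l | (∃ ol, BLit.obj ol ∈ b ∧ l = BLit.obj ol)
     ∨ (∃ a, BLit.k a ∈ b ∧ l = BLit.obj (OLit.pos a))
     ∨ (∃ a, BLit.nk a ∈ b ∧ KSat W a ∧ l = BLit.obj (OLit.neg a))}

/-- The K15-reduct of `P` w.r.t. `W`: every subjective literal `K a` with
`W ⊭ K a` is replaced by `⊥` (hence a rule with such a literal positively in
its body can never fire and is removed), and all remaining occurrences of
`K a` are replaced by `a`. -/
def K15Reduct (P : Program α) (W : Set (Set α)) : Program α :=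
  {r' | ∃ r ∈ P, (∀ a, BLit.k a ∈ r.body → KSat W a) ∧
        r'.head = r.head ∧ r'.body = K15ReductBody W r.body}

/-- A non-empty `W` is a K15-world view of `P` iff `W` equals the set of all
stable models of the K15-reduct of `P` w.r.t. `W`. -/
def K15WorldView (P : Program α) (W : Set (Set α)) : Prop :=
  W.Nonempty ∧ W = {I | StableModel (K15Reduct P W) I}

/-- Epistemic stratification (Cabalar et al., Def. 6). -/
def EpistemicallyStratified (P : Program α) : Prop :=
  ∃ lam : α → ℤ,
    (∀ r ∈ P, ∀ a ∈ Rule.atoms r \ Rule.bodySubjAtoms r,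
        ∀ b ∈ Rule.atoms r \ Rule.bodySubjAtoms r, lam a = lam b) ∧
    (∀ r ∈ P, ∀ a ∈ r.head ∪ r.bodyObjAtoms, ∀ b ∈ Rule.bodySubjAtoms r, lam b < lam a)

/-- Atoms: `e` = eligible, `h` = high, `m` = minority, `f` = fair,
`ne` = noeligible, `iv` = interview (`in` is a reserved word), `a` = appointment. -/
inductive At : Type where
  | e | h | m | f | ne | iv | a

/-- The ELP Π₃ = { e ← h. ; e ← m, f. ; ne ← not f, not h. ; f | h. ;
in ← not K e, not K ne. ; a ← K in. } -/
def Pi3 : Program At :=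
  { ⟨{At.e}, {BLit.obj (OLit.pos At.h)}⟩,
    ⟨{At.e}, {BLit.obj (OLit.pos At.m), BLit.obj (OLit.pos At.f)}⟩,
    ⟨{At.ne}, {BLit.obj (OLit.neg At.f), BLit.obj (OLit.neg At.h)}⟩,
    ⟨{At.f, At.h}, ∅⟩,
    ⟨{At.iv}, {BLit.nk At.e, BLit.nk At.ne}⟩,
    ⟨{At.a}, {BLit.k At.iv}⟩ }


section Aux

lemma mem_red_pos (W : Set (Set At)) (b : Set (BLit At)) (x : At) :
    BLit.obj (OLit.pos x) ∈ K15ReductBody W b ↔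
      BLit.obj (OLit.pos x) ∈ b ∨ BLit.k x ∈ b := by
  simp [K15ReductBody]

lemma mem_red_neg (W : Set (Set At)) (b : Set (BLit At)) (x : At) :
    BLit.obj (OLit.neg x) ∈ K15ReductBody W b ↔
      BLit.obj (OLit.neg x) ∈ b ∨ (BLit.nk x ∈ b ∧ KSat W x) := by
  simp [K15ReductBody]


abbrev WV1 : Set At := {At.h, At.e, At.iv, At.a}
abbrev WV2 : Set At := {At.f, At.iv, At.a}

lemma mem_GL (W : Set (Set At)) (I : Set At) (hb : Set At × Set At) :
    hb ∈ GLReduct (K15Reduct Pi3 W) I ↔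
      hb = ({At.e}, {At.h}) ∨
      hb = ({At.e}, {At.m, At.f}) ∨
      (At.f ∉ I ∧ At.h ∉ I ∧ hb = ({At.ne}, ∅)) ∨
      hb = ({At.f, At.h}, (∅ : Set At)) ∨
      ((KSat W At.e → At.e ∉ I) ∧ (KSat W At.ne → At.ne ∉ I) ∧ hb = ({At.iv}, ∅)) ∨
      (KSat W At.iv ∧ hb = ({At.a}, {At.iv})) := by
  constructor
  · rintro ⟨r', ⟨r, hrP, hk, hhead, hbody⟩, hneg, rfl⟩
    simp only [Pi3, Set.mem_insert_iff, Set.mem_singleton_iff] at hrP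
    rcases hrP with rfl | rfl | rfl | rfl | rfl | rfl
    · have hp : r'.posBody = {At.h} := by
        ext x; simp [Rule.posBody, hbody, mem_red_pos]
      left; rw [hhead, hp]
    · have hp : r'.posBody = {At.m, At.f} := by
        ext x; simp [Rule.posBody, hbody, mem_red_pos]
      right; left; rw [hhead, hp]
    · have hn : r'.negBody = {At.f, At.h} := by
        ext x; simp [Rule.negBody, hbody, mem_red_neg]
      have hp : r'.posBody = ∅ := by
        ext x; simp [Rule.posBody, hbody, mem_red_pos]
      rw [hn] at hneg
      refine Or.inr (Or.inr (Or.inl ⟨hneg At.f (by simp), hneg At.h (by simp), ?_⟩))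
      rw [hhead, hp]
    · have hp : r'.posBody = ∅ := by
        ext x; simp [Rule.posBody, hbody, mem_red_pos]
      refine Or.inr (Or.inr (Or.inr (Or.inl ?_)))
      rw [hhead, hp]
    · have hn : r'.negBody = {x | (x = At.e ∨ x = At.ne) ∧ KSat W x} := by
        ext x; simp [Rule.negBody, hbody, mem_red_neg]
      have hp : r'.posBody = ∅ := by
        ext x; simp [Rule.posBody, hbody, mem_red_pos]
      rw [hn] at hneg
      refine Or.inr (Or.inr (Or.inr (Or.inr (Or.inl
        ⟨fun hke => hneg At.e ⟨Or.inl rfl, hke⟩,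
         fun hkne => hneg At.ne ⟨Or.inr rfl, hkne⟩, ?_⟩))))
      rw [hhead, hp]
    · have hkiv : KSat W At.iv := hk At.iv rfl
      have hp : r'.posBody = {At.iv} := by
        ext x; simp [Rule.posBody, hbody, mem_red_pos]
      refine Or.inr (Or.inr (Or.inr (Or.inr (Or.inr ⟨hkiv, ?_⟩))))
      rw [hhead, hp]
  · intro hcase
    rcases hcase with h1 | h2 | ⟨hf, hh, h3⟩ | h4 | ⟨he, hne, h5⟩ | ⟨hkiv, h6⟩
    · refine ⟨⟨{At.e}, K15ReductBody W {BLit.obj (OLit.pos At.h)}⟩,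
        ⟨⟨{At.e}, {BLit.obj (OLit.pos At.h)}⟩,
          by simp only [Pi3, Set.mem_insert_iff, Set.mem_singleton_iff]; tauto,
          by intro x hx; simp at hx, rfl, rfl⟩, ?_, ?_⟩
      · intro x hx; simp [Rule.negBody, mem_red_neg] at hx
      · have hp : Rule.posBody ⟨{At.e}, K15ReductBody W {BLit.obj (OLit.pos At.h)}⟩ = {At.h} := by
          ext x; simp [Rule.posBody, mem_red_pos]
        rw [h1, hp]
    · refine ⟨⟨{At.e}, K15ReductBody W {BLit.obj (OLit.pos At.m), BLit.obj (OLit.pos At.f)}⟩,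
        ⟨⟨{At.e}, {BLit.obj (OLit.pos At.m), BLit.obj (OLit.pos At.f)}⟩,
          by simp only [Pi3, Set.mem_insert_iff, Set.mem_singleton_iff]; tauto,
          by intro x hx; simp at hx, rfl, rfl⟩, ?_, ?_⟩
      · intro x hx; simp [Rule.negBody, mem_red_neg] at hx
      · have hp : Rule.posBody ⟨{At.e}, K15ReductBody W
            {BLit.obj (OLit.pos At.m), BLit.obj (OLit.pos At.f)}⟩ = {At.m, At.f} := by
          ext x; simp [Rule.posBody, mem_red_pos]
        rw [h2, hp]
    · refine ⟨⟨{At.ne}, K15ReductBody W {BLit.obj (OLit.neg At.f), BLit.obj (OLit.neg At.h)}⟩,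
        ⟨⟨{At.ne}, {BLit.obj (OLit.neg At.f), BLit.obj (OLit.neg At.h)}⟩,
          by simp only [Pi3, Set.mem_insert_iff, Set.mem_singleton_iff]; tauto,
          by intro x hx; simp at hx, rfl, rfl⟩, ?_, ?_⟩
      · intro x hx; simp [Rule.negBody, mem_red_neg] at hx
        rcases hx with rfl | rfl
        · exact hf
        · exact hh
      · have hp : Rule.posBody ⟨{At.ne}, K15ReductBody W
            {BLit.obj (OLit.neg At.f), BLit.obj (OLit.neg At.h)}⟩ = ∅ := by
          ext x; simp [Rule.posBody, mem_red_pos]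
        rw [h3, hp]
    · refine ⟨⟨{At.f, At.h}, K15ReductBody W ∅⟩,
        ⟨⟨{At.f, At.h}, ∅⟩,
          by simp only [Pi3, Set.mem_insert_iff, Set.mem_singleton_iff]; tauto,
          by intro x hx; simp at hx, rfl, rfl⟩, ?_, ?_⟩
      · intro x hx; simp [Rule.negBody, mem_red_neg] at hx
      · have hp : Rule.posBody ⟨({At.f, At.h} : Set At), K15ReductBody W ∅⟩ = ∅ := by
          ext x; simp [Rule.posBody, mem_red_pos]
        rw [h4, hp]
    · refine ⟨⟨{At.iv}, K15ReductBody W {BLit.nk At.e, BLit.nk At.ne}⟩,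
        ⟨⟨{At.iv}, {BLit.nk At.e, BLit.nk At.ne}⟩,
          by simp only [Pi3, Set.mem_insert_iff, Set.mem_singleton_iff]; tauto,
          by intro x hx; simp at hx, rfl, rfl⟩, ?_, ?_⟩
      · intro x hx; simp [Rule.negBody, mem_red_neg] at hx
        obtain ⟨hor, hkx⟩ := hx
        rcases hor with rfl | rfl
        · exact he hkx
        · exact hne hkx
      · have hp : Rule.posBody ⟨{At.iv}, K15ReductBody W
            {BLit.nk At.e, BLit.nk At.ne}⟩ = ∅ := by
          ext x; simp [Rule.posBody, mem_red_pos]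
        rw [h5, hp]
    · refine ⟨⟨{At.a}, K15ReductBody W {BLit.k At.iv}⟩,
        ⟨⟨{At.a}, {BLit.k At.iv}⟩,
          by simp only [Pi3, Set.mem_insert_iff, Set.mem_singleton_iff]; tauto,
          by intro x hx; simp at hx; subst hx; exact hkiv, rfl, rfl⟩, ?_, ?_⟩
      · intro x hx; simp [Rule.negBody, mem_red_neg] at hx
      · have hp : Rule.posBody ⟨{At.a}, K15ReductBody W {BLit.k At.iv}⟩ = {At.iv} := by
          ext x; simp [Rule.posBody, mem_red_pos]
        rw [h6, hp]

/-- The "f-branch" interpretation. -/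
def Sf (W : Set (Set At)) : Set At :=
  {x | x = At.f ∨ x = At.iv ∨ (KSat W At.iv ∧ x = At.a)}

lemma stable_Sf (W : Set (Set At)) : StableModel (K15Reduct Pi3 W) (Sf W) := by
  constructor
  · intro hb hmem
    rw [mem_GL] at hmem
    rcases hmem with rfl | rfl | ⟨hf, hh, rfl⟩ | rfl | ⟨he, hne, rfl⟩ | ⟨hkiv, rfl⟩
    · intro hsub; exfalso
      have : At.h ∈ Sf W := hsub rfl
      simp [Sf] at this
    · intro hsub; exfalso
      have : At.m ∈ Sf W := hsub (by simp)
      simp [Sf] at this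
    · exact absurd (show At.f ∈ Sf W from Or.inl rfl) hf
    · intro _; exact ⟨At.f, by simp, Or.inl rfl⟩
    · intro _; exact ⟨At.iv, rfl, Or.inr (Or.inl rfl)⟩
    · intro _; exact ⟨At.a, rfl, Or.inr (Or.inr ⟨hkiv, rfl⟩)⟩
  · intro J hJ hmod
    have hf : At.f ∈ J := by
      have h4 := hmod _ ((mem_GL W (Sf W) _).mpr
        (Or.inr (Or.inr (Or.inr (Or.inl rfl))))) (Set.empty_subset J)
      obtain ⟨y, hy1, hy2⟩ := h4
      rcases (by simpa using hy1 : y = At.f ∨ y = At.h) with rfl | rfl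
      · exact hy2
      · exact absurd (hJ hy2) (by simp [Sf])
    have hiv : At.iv ∈ J := by
      have h5 := hmod _ ((mem_GL W (Sf W) _).mpr (Or.inr (Or.inr (Or.inr (Or.inr (Or.inl
        ⟨fun _ => by simp [Sf], fun _ => by simp [Sf], rfl⟩)))))) (Set.empty_subset J)
      simpa using h5
    have ha : KSat W At.iv → At.a ∈ J := by
      intro hkiv
      have h6 := hmod _ ((mem_GL W (Sf W) _).mpr (Or.inr (Or.inr (Or.inr (Or.inr (Or.inr
        ⟨hkiv, rfl⟩)))))) (by simpa using hiv)
      simpa using h6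
    refine Set.Subset.antisymm hJ ?_
    intro x hx
    rcases hx with rfl | rfl | ⟨hkiv, rfl⟩
    · exact hf
    · exact hiv
    · exact ha hkiv

lemma Sf_eq (W : Set (Set At)) (hkiv : KSat W At.iv) : Sf W = WV2 := by
  ext x; simp [Sf, hkiv]

lemma stable_WV1 (W : Set (Set At)) (hke : ¬ KSat W At.e) (hkiv : KSat W At.iv) :
    StableModel (K15Reduct Pi3 W) WV1 := by
  constructor
  · intro hb hmem
    rw [mem_GL] at hmem
    rcases hmem with rfl | rfl | ⟨hf, hh, rfl⟩ | rfl | ⟨he, hne, rfl⟩ | ⟨hkiv', rfl⟩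
    · intro _; exact ⟨At.e, by simp⟩
    · intro hsub; exfalso
      have : At.m ∈ WV1 := hsub (by simp)
      simp at this
    · exact absurd (show At.h ∈ WV1 by simp) hh
    · intro _; exact ⟨At.h, by simp⟩
    · intro _; exact ⟨At.iv, by simp⟩
    · intro _; exact ⟨At.a, by simp⟩
  · intro J hJ hmod
    have hh : At.h ∈ J := by
      have h4 := hmod _ ((mem_GL W WV1 _).mpr
        (Or.inr (Or.inr (Or.inr (Or.inl rfl))))) (Set.empty_subset J)
      obtain ⟨y, hy1, hy2⟩ := h4
      rcases (by simpa using hy1 : y = At.f ∨ y = At.h) with rfl | rfl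
      · exact absurd (hJ hy2) (by simp)
      · exact hy2
    have he : At.e ∈ J := by
      have h1 := hmod _ ((mem_GL W WV1 _).mpr (Or.inl rfl)) (by simpa using hh)
      simpa using h1
    have hiv : At.iv ∈ J := by
      have h5 := hmod _ ((mem_GL W WV1 _).mpr (Or.inr (Or.inr (Or.inr (Or.inr (Or.inl
        ⟨fun hk => absurd hk hke, fun _ => by simp, rfl⟩)))))) (Set.empty_subset J)
      simpa using h5
    have ha : At.a ∈ J := by
      have h6 := hmod _ ((mem_GL W WV1 _).mpr (Or.inr (Or.inr (Or.inr (Or.inr (Or.inr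
        ⟨hkiv, rfl⟩)))))) (by simpa using hiv)
      simpa using h6
    refine Set.Subset.antisymm hJ ?_
    intro x hx
    rcases (by simpa using hx : x = At.h ∨ x = At.e ∨ x = At.iv ∨ x = At.a) with
      rfl | rfl | rfl | rfl
    · exact hh
    · exact he
    · exact hiv
    · exact ha

lemma stable_only (W : Set (Set At)) (hke : ¬ KSat W At.e) (hkne : ¬ KSat W At.ne)
    (hkiv : KSat W At.iv) (I : Set At) (hI : StableModel (K15Reduct Pi3 W) I) :
    I = WV1 ∨ I = WV2 := by
  obtain ⟨hmodI, hmin⟩ := hI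
  have hfh : At.f ∈ I ∨ At.h ∈ I := by
    have h4 := hmodI _ ((mem_GL W I _).mpr
      (Or.inr (Or.inr (Or.inr (Or.inl rfl))))) (Set.empty_subset I)
    obtain ⟨y, hy1, hy2⟩ := h4
    rcases (by simpa using hy1 : y = At.f ∨ y = At.h) with rfl | rfl
    · exact Or.inl hy2
    · exact Or.inr hy2
  have hiv : At.iv ∈ I := by
    have h5 := hmodI _ ((mem_GL W I _).mpr (Or.inr (Or.inr (Or.inr (Or.inr (Or.inl
      ⟨fun hk => absurd hk hke, fun hk => absurd hk hkne, rfl⟩)))))) (Set.empty_subset I)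
    simpa using h5
  have ha : At.a ∈ I := by
    have h6 := hmodI _ ((mem_GL W I _).mpr (Or.inr (Or.inr (Or.inr (Or.inr (Or.inr
      ⟨hkiv, rfl⟩)))))) (by simpa using hiv)
    simpa using h6
  by_cases hh : At.h ∈ I
  · left
    have he : At.e ∈ I := by
      have h1 := hmodI _ ((mem_GL W I _).mpr (Or.inl rfl)) (by simpa using hh)
      simpa using h1
    have hsub : WV1 ⊆ I := by
      intro x hx
      rcases (by simpa using hx : x = At.h ∨ x = At.e ∨ x = At.iv ∨ x = At.a) with
        rfl | rfl | rfl | rfl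
      · exact hh
      · exact he
      · exact hiv
      · exact ha
    refine (hmin WV1 hsub ?_).symm
    intro hb hmem
    rw [mem_GL] at hmem
    rcases hmem with rfl | rfl | ⟨hf', hh', rfl⟩ | rfl | ⟨he', hne', rfl⟩ | ⟨hkiv', rfl⟩
    · intro _; exact ⟨At.e, by simp⟩
    · intro hsub'; exfalso
      have : At.m ∈ WV1 := hsub' (by simp)
      simp at this
    · exact absurd hh hh'
    · intro _; exact ⟨At.h, by simp⟩
    · intro _; exact ⟨At.iv, by simp⟩
    · intro _; exact ⟨At.a, by simp⟩
  · right
    have hf : At.f ∈ I := hfh.resolve_right hh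
    have hsub : WV2 ⊆ I := by
      intro x hx
      rcases (by simpa using hx : x = At.f ∨ x = At.iv ∨ x = At.a) with rfl | rfl | rfl
      · exact hf
      · exact hiv
      · exact ha
    refine (hmin WV2 hsub ?_).symm
    intro hb hmem
    rw [mem_GL] at hmem
    rcases hmem with rfl | rfl | ⟨hf', hh', rfl⟩ | rfl | ⟨he', hne', rfl⟩ | ⟨hkiv', rfl⟩
    · intro hsub'; exfalso
      have : At.h ∈ WV2 := hsub' (by simp)
      simp at this
    · intro hsub'; exfalso
      have : At.m ∈ WV2 := hsub' (by simp)
      simp at this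
    · exact absurd hf hf'
    · intro _; exact ⟨At.f, by simp⟩
    · intro _; exact ⟨At.iv, by simp⟩
    · intro _; exact ⟨At.a, by simp⟩

end Aux


/-- Π₃ has exactly one K15-world view, namely
{{h, e, in, a}, {f, in, a}}. -/
theorem pi3_world_views (W : Set (Set At)) :
    K15WorldView Pi3 W ↔ W = {{At.h, At.e, At.iv, At.a}, {At.f, At.iv, At.a}} := by
  constructor
  · rintro ⟨-, hW⟩
    have hSf : Sf W ∈ W := by
      have := stable_Sf W
      rw [← Set.mem_setOf_eq (p := fun I => StableModel (K15Reduct Pi3 W) I), ← hW] at this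
      exact this
    have hke : ¬ KSat W At.e := fun hk => by have := hk _ hSf; simp [Sf] at this
    have hkne : ¬ KSat W At.ne := fun hk => by have := hk _ hSf; simp [Sf] at this
    have hkiv : KSat W At.iv := by
      intro I hI
      rw [hW] at hI
      obtain ⟨hmodI, -⟩ := hI
      have h5 := hmodI _ ((mem_GL W I _).mpr (Or.inr (Or.inr (Or.inr (Or.inr (Or.inl
        ⟨fun hk => absurd hk hke, fun hk => absurd hk hkne, rfl⟩)))))) (Set.empty_subset I)
      simpa using h5
    rw [hW]
    ext I
    simp only [Set.mem_setOf_eq, Set.mem_insert_iff, Set.mem_singleton_iff]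
    constructor
    · exact stable_only W hke hkne hkiv I
    · rintro (rfl | rfl)
      · exact stable_WV1 W hke hkiv
      · have := stable_Sf W
        rwa [Sf_eq W hkiv] at this
  · rintro rfl
    have hke : ¬ KSat {WV1, WV2} At.e := fun hk => by
      have := hk WV2 (by simp); simp at this
    have hkne : ¬ KSat {WV1, WV2} At.ne := fun hk => by
      have := hk WV2 (by simp); simp at this
    have hkiv : KSat {WV1, WV2} At.iv := by
      intro I hI
      rcases (by simpa using hI : I = WV1 ∨ I = WV2) with rfl | rfl <;> simp
    refine ⟨⟨WV1, by simp⟩, ?_⟩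
    ext I
    simp only [Set.mem_insert_iff, Set.mem_singleton_iff, Set.mem_setOf_eq]
    constructor
    · rintro (rfl | rfl)
      · exact stable_WV1 _ hke hkiv
      · have := stable_Sf {WV1, WV2}
        rwa [Sf_eq _ hkiv] at this
    · exact stable_only _ hke hkne hkiv I
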